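/- Let k ≥ 3 be an odd integer and let D be a k-quasi-transitive digraph. If v is a (k+2)-king of D and u is a vertex with d(v,u) = k+2, then u is a 4-king of D. Moreover, for every vertex w with d(u,w) = 4 one has d(v,w) = k+2, and w is also a 4-king of D. -/

import Mathlib

variable {V : Type*}

/-- A directed path of length `n` from `u` to `v` in the digraph with arc relation `A`:
a sequence of `n + 1` pairwise distinct vertices, consecutive ones joined by arcs. -/
def HasPathN (A : V → V → Prop) (u v : V) (n : ℕ) : Prop :=
  ∃ f : Fin (n + 1) → V, Function.Injective f ∧ f 0 = u ∧ f (Fin.last n) = v ∧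
    ∀ i : Fin n, A (f i.castSucc) (f i.succ)

/-- The distance from `u` to `v`: the length of a shortest directed path from `u` to `v`,
`⊤` if there is no such path. -/
noncomputable def ddist (A : V → V → Prop) (u v : V) : ℕ∞ :=
  sInf {n : ℕ∞ | ∃ m : ℕ, n = (m : ℕ∞) ∧ HasPathN A u v m}

/-- `D` is `k`-quasi-transitive if for every directed path `(v_0, …, v_k)` of length `k`,
either `(v_0, v_k)` or `(v_k, v_0)` is an arc. -/
def KQuasiTrans (A : V → V → Prop) (k : ℕ) : Prop :=
  ∀ u v : V, HasPathN A u v k → A u v ∨ A v u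

/-- A vertex `v` is an `r`-king if every vertex is within distance `r` from `v`. -/
def IsRKing (A : V → V → Prop) (r : ℕ) (v : V) : Prop :=
  ∀ u : V, ddist A v u ≤ (r : ℕ∞)

/-- `u` reaches `v` by a directed path. -/
def Reaches (A : V → V → Prop) (u v : V) : Prop :=
  ∃ n : ℕ, HasPathN A u v n

/-- A strong component: the set of all vertices mutually reachable with some vertex. -/
def IsStrongComponent (A : V → V → Prop) (S : Set V) : Prop :=
  ∃ v : V, S = {u | Reaches A u v ∧ Reaches A v u}

/-- An initial strong component: a strong component receiving no arcs from outside. -/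
def IsInitialStrongComponent (A : V → V → Prop) (S : Set V) : Prop :=
  IsStrongComponent A S ∧ ∀ u v : V, u ∉ S → v ∈ S → ¬ A u v

/-- The out-degree of `v` in `D`. -/
noncomputable def outDeg (A : V → V → Prop) (v : V) : ℕ :=
  {u : V | A v u}.ncard

/-- The out-degree of `v` in the subdigraph of `D` induced by `C`. -/
noncomputable def outDegIn (A : V → V → Prop) (C : Set V) (v : V) : ℕ :=
  {u ∈ C | A v u}.ncard

/-- The maximum out-degree of the subdigraph induced by `C`. -/
noncomputable def maxOutDegIn (A : V → V → Prop) (C : Set V) : ℕ :=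
  sSup (outDegIn A C '' C)

/-! Let `v = y 0, …, y (k + 2) = u` be a shortest path. On a shortest path from `v` the vertex
`x i` lies at distance `i` from `v`, so a walk glued from pieces of such paths occupying disjoint
distance ranges is a path. Each such path of length `k` carries an arc between its ends, and one
of the two directions would give `d(v, u) < k + 2`. This yields `y k → v` and `u → y 2`; the
paths `u, y (j + 2), …, y k, x 0, …, x j` propagate `u → y (j + 2)` to `u → x j`, and
`u, x 0, …, x (k - 1)` gives `u → x (k - 1)`. As `k` is odd, `u` thus dominates every
even-indexed `x j` with `j ≤ k - 1`, so a vertex at distance `m` from `v` is within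
`max 2 (m + 2 - k)` of `u`. -/

open List

section Walks

variable {A : V → V → Prop}

theorem exists_nodup_of_isChain : ∀ {l : List V}, l.IsChain A →
    ∃ l' : List V, l'.IsChain A ∧ l'.Nodup ∧ l'.head? = l.head? ∧ l'.getLast? = l.getLast? ∧
      l'.length ≤ l.length
  | [], _ => ⟨[], by simp⟩
  | a :: l, h => by
    obtain ⟨hhd, htl⟩ := isChain_cons.1 h
    obtain ⟨l', hc, hnd, hhead, hlast, hlen⟩ := exists_nodup_of_isChain htl
    by_cases ha : a ∈ l'
    · -- cut off the closed walk from `a` back to `a`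
      obtain ⟨s, t, rfl⟩ := append_of_mem ha
      refine ⟨a :: t, hc.suffix (suffix_append _ _), hnd.sublist (sublist_append_right _ _), rfl,
        ?_, ?_⟩
      · rw [getLast?_cons, getLast?_cons, ← hlast, getLast?_append]
        simp [getLast?_cons]
      · simp at hlen ⊢; omega
    · refine ⟨a :: l', isChain_cons.2 ⟨fun b hb => hhd b (hhead ▸ hb), hc⟩,
        nodup_cons.2 ⟨ha, hnd⟩, rfl, by simp [getLast?_cons, hlast], by simpa using hlen⟩

theorem hasPathN_of_isChain {l : List V} {a b : V} (hc : l.IsChain A) (hnd : l.Nodup)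
    (ha : l.head? = some a) (hb : l.getLast? = some b) : HasPathN A a b (l.length - 1) := by
  have hpos : 0 < l.length := by cases l <;> simp_all
  refine ⟨fun i => l[i.1], fun i j hij => Fin.ext ((hnd.getElem_inj_iff).1 hij), ?_, ?_, ?_⟩
  · simpa [head?_eq_getElem?, hpos] using ha
  · simpa [getLast?_eq_getElem?, hpos] using hb
  · exact fun i => isChain_iff_getElem.1 hc i.1 (by omega)

theorem HasPathN.exists_isChain {a b : V} {n : ℕ} (h : HasPathN A a b n) :
    ∃ l : List V, l.IsChain A ∧ l.head? = some a ∧ l.getLast? = some b ∧ l.length = n + 1 := by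
  obtain ⟨f, -, h0, hn, hadj⟩ := h
  refine ⟨ofFn f, isChain_ofFn.2 fun i hi => hadj ⟨i, by omega⟩, ?_, ?_, length_ofFn⟩
  · simp [head?_eq_getElem?, h0]
  · rw [getLast?_eq_getElem?, length_ofFn, Nat.add_sub_cancel, List.getElem?_ofFn, ← hn]
    simp [Fin.last]

theorem ddist_le_of_hasPathN {a b : V} {n : ℕ} (h : HasPathN A a b n) : ddist A a b ≤ n :=
  sInf_le ⟨n, rfl, h⟩

theorem exists_hasPathN_of_ddist_ne_top {a b : V} (h : ddist A a b ≠ ⊤) :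
    ∃ n : ℕ, ddist A a b = n ∧ HasPathN A a b n := by
  have hne : {n : ℕ∞ | ∃ m : ℕ, n = m ∧ HasPathN A a b m}.Nonempty := by
    by_contra he
    exact h (by rw [ddist, Set.not_nonempty_iff_eq_empty.1 he, sInf_empty])
  exact csInf_mem hne

theorem ddist_le_iff {a b : V} {n : ℕ} : ddist A a b ≤ n ↔
    ∃ l : List V, l.IsChain A ∧ l.head? = some a ∧ l.getLast? = some b ∧ l.length ≤ n + 1 := by
  constructor
  · intro h
    obtain ⟨m, hm, hp⟩ := exists_hasPathN_of_ddist_ne_top (ne_top_of_le_ne_top (by simp) h)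
    obtain ⟨l, hc, ha, hb, hl⟩ := hp.exists_isChain
    have : m ≤ n := by exact_mod_cast hm ▸ h
    exact ⟨l, hc, ha, hb, by omega⟩
  · rintro ⟨l, hc, ha, hb, hl⟩
    obtain ⟨l', hc', hnd, ha', hb', hl'⟩ := exists_nodup_of_isChain hc
    exact (ddist_le_of_hasPathN (hasPathN_of_isChain hc' hnd (ha' ▸ ha) (hb' ▸ hb))).trans
      (by exact_mod_cast (by omega))

theorem ddist_triangle (a b c : V) : ddist A a c ≤ ddist A a b + ddist A b c := by
  rcases eq_or_ne (ddist A a b) ⊤ with h₁ | h₁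
  · simp [h₁]
  rcases eq_or_ne (ddist A b c) ⊤ with h₂ | h₂
  · simp [h₂]
  obtain ⟨m, hm⟩ := ENat.ne_top_iff_exists.1 h₁
  obtain ⟨n, hn⟩ := ENat.ne_top_iff_exists.1 h₂
  obtain ⟨l₁, hc₁, ha₁, hb₁, hl₁⟩ := ddist_le_iff.1 hm.ge
  obtain ⟨l₂, hc₂, hb₂, hc₂', hl₂⟩ := ddist_le_iff.1 hn.ge
  obtain ⟨t, rfl⟩ : ∃ t, l₂ = b :: t := by cases l₂ <;> simp_all
  rw [← hm, ← hn, ← Nat.cast_add, ddist_le_iff]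
  refine ⟨l₁ ++ t, isChain_append.2 ⟨hc₁, hc₂.tail, ?_⟩, ?_, ?_, ?_⟩
  · simpa [hb₁] using (isChain_cons.1 hc₂).1
  · cases l₁ <;> simp_all
  · rw [getLast?_cons] at hc₂'
    cases ht : t.getLast? <;> simp_all [getLast?_append]
  · simp at hl₂ ⊢; omega

end Walks

section Geodesics

variable {A : V → V → Prop}

theorem isChain_map_range' {x : ℕ → V} {a n : ℕ}
    (h : ∀ i, a ≤ i → i + 1 < a + n → A (x i) (x (i + 1))) :
    ((range' a n).map x).IsChain A := by
  induction n generalizing a with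
  | zero => simp
  | succ n ih =>
    rw [range'_succ, map_cons, isChain_cons]
    refine ⟨fun b hb => ?_, ih fun i hi hi' => h i (by omega) (by omega)⟩
    cases n with
    | zero => simp at hb
    | succ n =>
      simp only [range'_succ, map_cons, head?_cons, Option.mem_def, Option.some_inj] at hb
      exact hb ▸ h a le_rfl (by omega)

theorem ddist_le_of_forall_adj {x : ℕ → V} {a b : ℕ} (hab : a ≤ b)
    (h : ∀ i, a ≤ i → i < b → A (x i) (x (i + 1))) : ddist A (x a) (x b) ≤ (b - a : ℕ) :=
  ddist_le_iff.2 ⟨_, isChain_map_range' (n := b - a + 1) fun i hi hi' => h i hi (by omega),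
    by simp [range'_succ], by simp [getLast?_range']; congr; omega, by simp⟩

theorem ddist_le_one_of_adj {a b : V} (h : A a b) : ddist A a b ≤ 1 :=
  ddist_le_iff.2 ⟨[a, b], by simpa using h, rfl, rfl, le_rfl⟩

structure IsGeodesic (A : V → V → Prop) (v : V) (x : ℕ → V) (n : ℕ) : Prop where
  zero : x 0 = v
  adj : ∀ i < n, A (x i) (x (i + 1))
  ddist_eq : ∀ i ≤ n, ddist A v (x i) = i

theorem exists_isGeodesic {v w : V} {n : ℕ} (h : ddist A v w = n) :
    ∃ x : ℕ → V, IsGeodesic A v x n ∧ x n = w := by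
  obtain ⟨m, hm, f, -, h0, hn, hadj⟩ :=
    exists_hasPathN_of_ddist_ne_top (h ▸ ENat.natCast_ne_top n)
  obtain rfl : m = n := by exact_mod_cast hm.symm.trans h
  set x : ℕ → V := fun i => f (Fin.clamp i m)
  have hx0 : x 0 = v := by simp [x, Fin.clamp, ← h0]
  have hxm : x m = w := by simp [x, Fin.clamp, ← hn]; rfl
  have hxadj : ∀ i < m, A (x i) (x (i + 1)) := fun i hi => by
    convert hadj ⟨i, hi⟩ using 2 <;> ext <;> simp [Fin.clamp] <;> omega
  refine ⟨x, ⟨hx0, hxadj, fun i hi => ?_⟩, hxm⟩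
  have hle : ddist A v (x i) ≤ i := by
    simpa [hx0] using ddist_le_of_forall_adj (Nat.zero_le i) fun j _ hj => hxadj j (by omega)
  obtain ⟨d, hd⟩ := ENat.ne_top_iff_exists.1 (ne_top_of_le_ne_top (ENat.natCast_ne_top _) hle)
  have htri : ddist A v w ≤ ddist A v (x i) + (m - i : ℕ) := calc
    _ ≤ ddist A v (x i) + ddist A (x i) w := ddist_triangle v (x i) w
    _ ≤ _ := by gcongr; exact hxm ▸ ddist_le_of_forall_adj hi fun j _ hj => hxadj j hj
  rw [h, ← hd, ← Nat.cast_add] at htri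
  rw [← hd] at hle ⊢
  have : m ≤ d + (m - i) := by exact_mod_cast htri
  have : d ≤ i := by exact_mod_cast hle
  congr 1; omega

namespace IsGeodesic

variable {v : V} {x y : ℕ → V} {m n : ℕ}

theorem le_add_one_of_adj (hx : IsGeodesic A v x m) (hy : IsGeodesic A v y n) {i j : ℕ}
    (hi : i ≤ m) (hj : j ≤ n) (h : A (x i) (y j)) : j ≤ i + 1 := by
  have : ddist A v (y j) ≤ ddist A v (x i) + 1 := calc
    _ ≤ ddist A v (x i) + ddist A (x i) (y j) := ddist_triangle v (x i) (y j)
    _ ≤ _ := by gcongr; exact ddist_le_one_of_adj h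
  rw [hx.ddist_eq i hi, hy.ddist_eq j hj] at this
  exact_mod_cast this

theorem map_ddist_segment (hx : IsGeodesic A v x n) {a c : ℕ} (h : a + c ≤ n + 1) :
    ((range' a c).map x).map (ddist A v) = (range' a c).map (↑) := by
  rw [map_map]
  exact map_congr_left fun i hi => hx.ddist_eq i (by rw [mem_range'_1] at hi; omega)

theorem nodup_segment (hx : IsGeodesic A v x n) {a c : ℕ} (h : a + c ≤ n + 1) :
    ((range' a c).map x).Nodup :=
  Nodup.of_map (ddist A v)
    (hx.map_ddist_segment h ▸ (nodup_range' (step := 1)).map Nat.cast_injective)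

end IsGeodesic

end Geodesics

namespace KQuasiTrans

variable {A : V → V → Prop} {k : ℕ} {v : V} {x y : ℕ → V} {m n : ℕ}

theorem adj_or_adj_of_isChain (hqt : KQuasiTrans A k) {l : List V} {a b : V} (hc : l.IsChain A)
    (hnd : l.Nodup) (hlen : l.length = k + 1) (ha : l.head? = some a)
    (hb : l.getLast? = some b) : A a b ∨ A b a :=
  hqt a b (by simpa [hlen] using hasPathN_of_isChain hc hnd ha hb)

theorem adj_back_of_isGeodesic (hqt : KQuasiTrans A k) (hk : 2 ≤ k) (hy : IsGeodesic A v y n)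
    {i : ℕ} (h : i + k ≤ n) : A (y (i + k)) (y i) := by
  refine (hqt.adj_or_adj_of_isChain (l := (range' i (k + 1)).map y)
    (isChain_map_range' fun j _ hj => hy.adj j (by omega)) (hy.nodup_segment (by omega))
    (by simp) (by simp [range'_succ]) (by simp [getLast?_range'])).resolve_left fun h' => ?_
  have := hy.le_add_one_of_adj hy (by omega) (by omega) h'
  omega

theorem adj_of_adj_add_two (hqt : KQuasiTrans A k) (hk : 2 ≤ k) (hy : IsGeodesic A v y (k + 2))
    (hx : IsGeodesic A v x m) {j : ℕ} (hjk : j + 2 ≤ k) (hjm : j ≤ m)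
    (h : A (y (k + 2)) (y (j + 2))) : A (y (k + 2)) (x j) := by
  -- the path `y (k+2), y (j+2), …, y k, x 0, …, x j`: its vertices lie at pairwise distinct
  -- distances from `v`
  set l₁ := (range' (j + 2) (k - j - 1)).map y
  set l₂ := (range' 0 (j + 1)).map x
  have hc : (y (k + 2) :: (l₁ ++ l₂)).IsChain A := by
    refine isChain_cons.2 ⟨?_, isChain_append.2 ⟨isChain_map_range' fun i _ hi => hy.adj i
      (by omega), isChain_map_range' fun i _ hi => hx.adj i (by omega), ?_⟩⟩
    · obtain ⟨c, hc⟩ : ∃ c, k - j - 1 = c + 1 := ⟨k - j - 2, by omega⟩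
      simpa [l₁, hc, range'_succ] using h
    · have hback := hqt.adj_back_of_isGeodesic hk hy (i := 0) (by omega)
      simp only [zero_add, hy.zero] at hback
      simp [l₁, l₂, getLast?_range', range'_succ, hx.zero,
        show j + 2 + (k - j - 1) - 1 = k by omega, hback]
  have hnd : (y (k + 2) :: (l₁ ++ l₂)).Nodup := by
    refine Nodup.of_map (ddist A v) ?_
    rw [map_cons, map_append, hy.map_ddist_segment (by omega), hx.map_ddist_segment (by omega),
      hy.ddist_eq _ le_rfl, ← map_append, ← map_cons]
    refine Nodup.map Nat.cast_injective ?_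
    simp only [nodup_cons, nodup_append, mem_append, mem_range'_1]
    refine ⟨by omega, nodup_range', nodup_range', fun a ha b hb => ?_⟩
    omega
  refine (hqt.adj_or_adj_of_isChain hc hnd (by simp [l₁, l₂]; omega) rfl ?_).resolve_right
    fun h' => ?_
  · simp [l₂, getLast?_cons, getLast?_append, getLast?_range']
  · have := hx.le_add_one_of_adj hy hjm le_rfl h'
    omega

theorem adj_geodesic_sub_one (hqt : KQuasiTrans A k) (hk : 1 ≤ k)
    (hy : IsGeodesic A v y (k + 2)) (hx : IsGeodesic A v x m) (hkm : k - 1 ≤ m)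
    (hv : A (y (k + 2)) v) :
    A (y (k + 2)) (x (k - 1)) := by
  set l := (range' 0 k).map x
  have hc : (y (k + 2) :: l).IsChain A := by
    refine isChain_cons.2 ⟨?_, isChain_map_range' fun i _ hi => hx.adj i (by omega)⟩
    obtain ⟨c, hc⟩ : ∃ c, k = c + 1 := ⟨k - 1, by omega⟩
    simpa [l, hc, range'_succ, hx.zero] using hv
  have hnd : (y (k + 2) :: l).Nodup := by
    refine Nodup.of_map (ddist A v) ?_
    rw [map_cons, hx.map_ddist_segment (by omega), hy.ddist_eq _ le_rfl, ← map_cons]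
    refine Nodup.map Nat.cast_injective (nodup_cons.2 ⟨?_, nodup_range'⟩)
    rw [mem_range'_1]
    omega
  refine (hqt.adj_or_adj_of_isChain hc hnd (by simp [l]) rfl ?_).resolve_right fun h' => ?_
  · simp [l, getLast?_cons, getLast?_range', show k ≠ 0 by omega]
  · have := hx.le_add_one_of_adj hy hkm le_rfl h'
    omega

theorem adj_geodesic_of_even (hqt : KQuasiTrans A k) (hk : 3 ≤ k) (hko : Odd k)
    (hy : IsGeodesic A v y (k + 2)) (hx : IsGeodesic A v x m) {j : ℕ} (hj : Even j)
    (hjk : j ≤ k - 1) (hjm : j ≤ m) : A (y (k + 2)) (x j) := by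
  have hv : A (y (k + 2)) v := by
    have h2 := hqt.adj_back_of_isGeodesic (by omega) hy (i := 2) (by omega)
    rw [add_comm] at h2
    simpa [hy.zero] using
      hqt.adj_of_adj_add_two (by omega) hy hy (j := 0) (by omega) (by omega) h2
  have hy_even : ∀ d i, i + 2 * d = k - 1 → A (y (k + 2)) (y i) := by
    intro d
    induction d with
    | zero =>
      intro i hi
      simpa [← hi] using hqt.adj_geodesic_sub_one (by omega) hy hy (by omega) hv
    | succ d ih =>
      intro i hi
      exact hqt.adj_of_adj_add_two (by omega) hy hy (by omega) (by omega) (ih (i + 2) (by omega))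
  obtain rfl | hne := eq_or_ne j (k - 1)
  · exact hqt.adj_geodesic_sub_one (by omega) hy hx hjm hv
  · obtain ⟨r, rfl⟩ := hj
    obtain ⟨s, rfl⟩ := hko
    exact hqt.adj_of_adj_add_two (by omega) hy hx (by omega) hjm
      (hy_even (s - r - 1) (r + r + 2) (by omega))

theorem ddist_le_of_isGeodesic (hqt : KQuasiTrans A k) (hk : 3 ≤ k) (hko : Odd k)
    (hy : IsGeodesic A v y (k + 2)) (hx : IsGeodesic A v x m) :
    ddist A (y (k + 2)) (x m) ≤ (max 2 (m + 2 - k) : ℕ) := by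
  -- `k - 1` is even, so `j` is `m` or `m - 1` when `m < k`, and `k - 1` otherwise
  set j := 2 * (min m (k - 1) / 2)
  have hj : A (y (k + 2)) (x j) :=
    hqt.adj_geodesic_of_even hk hko hy hx (even_two_mul _) (by omega) (by omega)
  calc ddist A (y (k + 2)) (x m) ≤ ddist A (y (k + 2)) (x j) + ddist A (x j) (x m) :=
        ddist_triangle _ _ _
    _ ≤ 1 + (m - j : ℕ) := by
        gcongr
        · exact ddist_le_one_of_adj hj
        · exact ddist_le_of_forall_adj (by omega) fun i _ hi => hx.adj i hi
    _ ≤ _ := by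
        obtain ⟨s, rfl⟩ := hko
        norm_cast
        omega

theorem ddist_le_of_ddist_eq (hqt : KQuasiTrans A k) (hk : 3 ≤ k) (hko : Odd k) {u w : V}
    (hu : ddist A v u = (k + 2 : ℕ)) (hw : ddist A v w = m) :
    ddist A u w ≤ (max 2 (m + 2 - k) : ℕ) := by
  obtain ⟨y, hy, rfl⟩ := exists_isGeodesic hu
  obtain ⟨x, hx, rfl⟩ := exists_isGeodesic hw
  exact hqt.ddist_le_of_isGeodesic hk hko hy hx

end KQuasiTrans

theorem kqt_odd_far_vertex_four_king_general
    (A : V → V → Prop)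
    (k : ℕ) (hk : 3 ≤ k) (hko : Odd k) (hqt : KQuasiTrans A k)
    (v u : V) (hv : IsRKing A (k + 2) v) (hd : ddist A v u = ((k : ℕ∞) + 2)) :
    IsRKing A 4 u ∧
      ∀ w : V, ddist A u w = (4 : ℕ∞) →
        ddist A v w = ((k : ℕ∞) + 2) ∧ IsRKing A 4 w := by
  have hcast : ((k + 2 : ℕ) : ℕ∞) = (k : ℕ∞) + 2 := by push_cast; rfl
  have hfar : ∀ z w, ddist A v z = (k : ℕ∞) + 2 →
      ∃ m ≤ k + 2, ddist A v w = m ∧ ddist A z w ≤ (max 2 (m + 2 - k) : ℕ) := by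
    intro z w hz
    obtain ⟨m, hm, -⟩ := exists_hasPathN_of_ddist_ne_top (ne_top_of_le_ne_top (by simp) (hv w))
    exact ⟨m, by exact_mod_cast hm ▸ hv w, hm,
      hqt.ddist_le_of_ddist_eq hk hko (hcast ▸ hz) hm⟩
  have hking : ∀ z, ddist A v z = (k : ℕ∞) + 2 → IsRKing A 4 z := fun z hz w => by
    obtain ⟨m, hm, -, h⟩ := hfar z w hz
    exact h.trans (by exact_mod_cast (by omega))
  refine ⟨hking u hd, fun w hw => ?_⟩
  obtain ⟨m, hm, hvw, h⟩ := hfar u w hd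
  obtain rfl : m = k + 2 := by
    have : 4 ≤ max 2 (m + 2 - k) := by exact_mod_cast hw ▸ h
    omega
  rw [hvw, hcast]
  exact ⟨rfl, hking w (hvw.trans hcast)⟩

/-- odd `k ≥ 3`; if `v` is a `(k+2)`-king and `d(v,u) = k+2`, then `u` is a
`4`-king; moreover every `w` with `d(u,w) = 4` satisfies `d(v,w) = k+2` and is a `4`-king. -/
theorem kqt_odd_far_vertex_four_king
    [Fintype V] (A : V → V → Prop) (hloop : ∀ v : V, ¬ A v v)
    (k : ℕ) (hk : 3 ≤ k) (hko : Odd k) (hqt : KQuasiTrans A k)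
    (v u : V) (hv : IsRKing A (k + 2) v) (hd : ddist A v u = ((k : ℕ∞) + 2)) :
    IsRKing A 4 u ∧
      ∀ w : V, ddist A u w = (4 : ℕ∞) →
        ddist A v w = ((k : ℕ∞) + 2) ∧ IsRKing A 4 w :=
  kqt_odd_far_vertex_four_king_general A k hk hko hqt v u hv hd
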